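/- Let Δ ⊆ ℝ² be the convex hull of (0,0), (1,0), (0,1), and let f₁(x,y) = (x + y/2, y/2), f₂(x,y) = (y/2, 1 − x − y/2). Then Δ is strongly-fibred by the IFS (f₁, f₂): for every point a ∈ Δ and every open set V ⊆ ℝ² containing a, there exists an infinite address (iₙ) ∈ {1,2}^ℕ such that ⋂_{n≥1} f_{i₁}∘…∘f_{iₙ}(Δ) ⊆ V. -/

import Mathlib

open Set

/-- The Barnsley–Vince map `f₁(x,y) = (x + y/2, y/2)`. -/
noncomputable def f1 : ℝ × ℝ → ℝ × ℝ := fun v => (v.1 + v.2 / 2, v.2 / 2)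

/-- The Barnsley–Vince map `f₂(x,y) = (y/2, 1 − x − y/2)`. -/
noncomputable def f2 : ℝ × ℝ → ℝ × ℝ := fun v => (v.2 / 2, 1 - v.1 - v.2 / 2)

/-- The filled triangle with vertices `(0,0)`, `(1,0)`, `(0,1)`. -/
def Δ : Set (ℝ × ℝ) := convexHull ℝ {(0, 0), (1, 0), (0, 1)}

/-- Composition `f_{i₁} ∘ … ∘ f_{iₙ}` along a list of indices. -/
def seqComp {X I : Type*} (f : I → X → X) : List I → (X → X)
  | [] => id
  | i :: t => f i ∘ seqComp f t

/-- The fibre `π(i₁i₂…) = ⋂_{n ≥ 1} f_{i₁}∘…∘f_{iₙ}(Δ)` of the address `(iₙ)`. -/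
noncomputable def fibre (i : ℕ → Fin 2) : Set (ℝ × ℝ) :=
  ⋂ n : ℕ, seqComp ![f1, f2] (List.ofFn fun m : Fin (n + 1) => i m) '' Δ

/- ### Auxiliary development -/

/-- Word application. -/
noncomputable def W (l : List (Fin 2)) : ℝ × ℝ → ℝ × ℝ := seqComp ![f1, f2] l

/-- The ℓ¹ distance on the plane. -/
def d1 (p q : ℝ × ℝ) : ℝ := |p.1 - q.1| + |p.2 - q.2|

/-- The fixed point of `f₂`. -/
noncomputable def cpt : ℝ × ℝ := (1/4, 1/2)

lemma W_nil (p : ℝ × ℝ) : W [] p = p := rfl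

lemma W_cons (i : Fin 2) (l : List (Fin 2)) (p : ℝ × ℝ) :
    W (i :: l) p = ![f1, f2] i (W l p) := rfl

lemma W_append (l₁ l₂ : List (Fin 2)) (p : ℝ × ℝ) :
    W (l₁ ++ l₂) p = W l₁ (W l₂ p) := by
  induction l₁ with
  | nil => rfl
  | cons i t ih => simp [W_cons, ih]

lemma d1_nonneg (p q : ℝ × ℝ) : 0 ≤ d1 p q :=
  add_nonneg (abs_nonneg _) (abs_nonneg _)

lemma d1_self (p : ℝ × ℝ) : d1 p p = 0 := by simp [d1]

lemma d1_triangle (p q r : ℝ × ℝ) : d1 p r ≤ d1 p q + d1 q r := by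
  have h1 : |p.1 - r.1| ≤ |p.1 - q.1| + |q.1 - r.1| := abs_sub_le _ _ _
  have h2 : |p.2 - r.2| ≤ |p.2 - q.2| + |q.2 - r.2| := abs_sub_le _ _ _
  unfold d1; linarith

lemma dist_le_d1 (p q : ℝ × ℝ) : dist p q ≤ d1 p q := by
  rw [Prod.dist_eq]
  have h1 : dist p.1 q.1 ≤ d1 p q := by
    rw [Real.dist_eq]; unfold d1; have := abs_nonneg (p.2 - q.2); linarith
  have h2 : dist p.2 q.2 ≤ d1 p q := by
    rw [Real.dist_eq]; unfold d1; have := abs_nonneg (p.1 - q.1); linarith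
  exact max_le h1 h2

lemma abs_lin (u v a b c d : ℝ) :
    |a*u + b*v| + |c*u + d*v| ≤ (|a|+|c|) * |u| + (|b|+|d|) * |v| := by
  have h1 : |a*u + b*v| ≤ |a| * |u| + |b| * |v| := by
    calc |a*u + b*v| ≤ |a*u| + |b*v| := abs_add_le _ _
      _ = |a| * |u| + |b| * |v| := by rw [abs_mul, abs_mul]
  have h2 : |c*u + d*v| ≤ |c| * |u| + |d| * |v| := by
    calc |c*u + d*v| ≤ |c*u| + |d*v| := abs_add_le _ _
      _ = |c| * |u| + |d| * |v| := by rw [abs_mul, abs_mul]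
  nlinarith [abs_nonneg u, abs_nonneg v]

lemma lip_f1 (p q : ℝ × ℝ) : d1 (f1 p) (f1 q) ≤ d1 p q := by
  simp only [f1, d1]
  have e1 : (p.1 + p.2/2) - (q.1 + q.2/2) = 1*(p.1-q.1) + (1/2)*(p.2-q.2) := by ring
  have e2 : p.2/2 - q.2/2 = 0*(p.1-q.1) + (1/2)*(p.2-q.2) := by ring
  rw [e1, e2]
  calc |1*(p.1-q.1) + (1/2)*(p.2-q.2)| + |0*(p.1-q.1) + (1/2)*(p.2-q.2)|
      ≤ (|(1:ℝ)|+|(0:ℝ)|) * |p.1-q.1| + (|(1/2:ℝ)|+|(1/2:ℝ)|) * |p.2-q.2| := abs_lin _ _ _ _ _ _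
    _ ≤ |p.1-q.1| + |p.2-q.2| := by
        simp only [abs_neg, abs_zero, abs_one]
        rw [abs_of_nonneg (by norm_num : (0:ℝ) ≤ 1/2)]
        norm_num

lemma lip_f2 (p q : ℝ × ℝ) : d1 (f2 p) (f2 q) ≤ d1 p q := by
  simp only [f2, d1]
  have e1 : p.2/2 - q.2/2 = 0*(p.1-q.1) + (1/2)*(p.2-q.2) := by ring
  have e2 : (1 - p.1 - p.2/2) - (1 - q.1 - q.2/2) = (-1)*(p.1-q.1) + (-(1/2))*(p.2-q.2) := by
    ring
  rw [e1, e2]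
  calc |0*(p.1-q.1) + (1/2)*(p.2-q.2)| + |(-1)*(p.1-q.1) + (-(1/2))*(p.2-q.2)|
      ≤ (|(0:ℝ)|+|(-1:ℝ)|) * |p.1-q.1| + (|(1/2:ℝ)|+|(-(1/2):ℝ)|) * |p.2-q.2| := abs_lin _ _ _ _ _ _
    _ ≤ |p.1-q.1| + |p.2-q.2| := by
        simp only [abs_neg, abs_zero, abs_one]
        rw [abs_of_nonneg (by norm_num : (0:ℝ) ≤ 1/2)]
        norm_num

lemma lip_f (i : Fin 2) (p q : ℝ × ℝ) : d1 (![f1, f2] i p) (![f1, f2] i q) ≤ d1 p q :=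
  match i with
  | 0 => lip_f1 p q
  | 1 => lip_f2 p q

lemma lip_W (l : List (Fin 2)) (p q : ℝ × ℝ) : d1 (W l p) (W l q) ≤ d1 p q := by
  induction l with
  | nil => simp [W_nil]
  | cons i t ih =>
    rw [W_cons, W_cons]
    exact (lip_f i _ _).trans ih
/- ### The set of approximable points -/

/-- `Reach a` means the orbit of `cpt` under the function semigroup approximates `a`. -/
def Reach (a : ℝ × ℝ) : Prop := ∀ ε > 0, ∃ l : List (Fin 2), d1 (W l cpt) a < ε

lemma reach_cpt : Reach cpt := fun ε hε => ⟨[], by simpa [W_nil, d1_self] using hε⟩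

lemma reach_f (i : Fin 2) {p : ℝ × ℝ} (h : Reach p) : Reach (![f1, f2] i p) := by
  intro ε hε
  obtain ⟨l, hl⟩ := h ε hε
  exact ⟨i :: l, by rw [W_cons]; exact lt_of_le_of_lt (lip_f i _ _) hl⟩

lemma reach_f1 {p : ℝ × ℝ} (h : Reach p) : Reach (f1 p) := reach_f 0 h

lemma reach_f2 {p : ℝ × ℝ} (h : Reach p) : Reach (f2 p) := reach_f 1 h

lemma reach_W (l : List (Fin 2)) {p : ℝ × ℝ} (h : Reach p) : Reach (W l p) := by
  induction l with
  | nil => simpa [W_nil] using h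
  | cons i t ih => rw [show W (i :: t) p = ![f1,f2] i (W t p) from rfl]; exact reach_f i ih

lemma reach_near {a : ℝ × ℝ} (h : ∀ ε > 0, ∃ p, Reach p ∧ d1 p a < ε) : Reach a := by
  intro ε hε
  obtain ⟨p, hp, hpa⟩ := h (ε/2) (by linarith)
  obtain ⟨l, hl⟩ := hp (ε/2) (by linarith)
  exact ⟨l, lt_of_le_of_lt (d1_triangle _ p a) (by linarith)⟩

/-- Explicit formula for iterates of `f₁`. -/
lemma W_replicate_zero (K : ℕ) (p : ℝ × ℝ) :
    W (List.replicate K 0) p = (p.1 + p.2 * (1 - (1/2)^K), p.2 * (1/2)^K) := by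
  induction K with
  | zero => simp [W_nil]
  | succ K ih =>
    rw [List.replicate_succ, W_cons, ih]
    show f1 _ = _
    simp only [f1]
    refine Prod.ext ?_ ?_ <;> simp <;> ring

/-- The projection `g(p) = (p₁+p₂, 0)` is a limit of `f₁`-iterates, so `Reach` is closed
under it. -/
lemma reach_g {p : ℝ × ℝ} (h : Reach p) : Reach (p.1 + p.2, 0) := by
  apply reach_near
  intro ε hε
  obtain ⟨K, hK⟩ : ∃ K : ℕ, ((1:ℝ)/2)^K < ε / (2 * |p.2| + 1) :=
    exists_pow_lt_of_lt_one (by positivity) (by norm_num)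
  refine ⟨W (List.replicate K 0) p, reach_W _ h, ?_⟩
  rw [W_replicate_zero]
  have : d1 (p.1 + p.2 * (1 - (1/2)^K), p.2 * (1/2)^K) (p.1 + p.2, 0)
      = 2 * |p.2| * (1/2)^K := by
    simp only [d1]
    have e1 : p.1 + p.2 * (1 - (1/2)^K) - (p.1 + p.2) = -(p.2 * (1/2)^K) := by ring
    rw [e1, abs_neg, sub_zero, abs_mul]
    have : |((1:ℝ)/2)^K| = (1/2)^K := abs_of_nonneg (by positivity)
    rw [this]; ring
  rw [this]
  have hpos : (0:ℝ) < 2 * |p.2| + 1 := by positivity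
  calc 2 * |p.2| * (1/2)^K ≤ (2 * |p.2| + 1) * ((1/2)^K) := by
        have : (0:ℝ) ≤ (1/2:ℝ)^K := by positivity
        nlinarith
    _ < (2 * |p.2| + 1) * (ε / (2 * |p.2| + 1)) := by
        apply mul_lt_mul_of_pos_left hK hpos
    _ = ε := by field_simp

/-- From any point, we can reach `(1 - q₁, 0)`. -/
lemma reach_T {q : ℝ × ℝ} (h : Reach q) : Reach (1 - q.1, 0) := by
  have h2 := reach_g (reach_f2 h)
  simp only [f2] at h2
  have : q.2 / 2 + (1 - q.1 - q.2/2) = 1 - q.1 := by ring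
  rwa [this] at h2

lemma reach_b34 : Reach ((3/4 : ℝ), 0) := by
  have := reach_g reach_cpt
  norm_num [cpt] at this
  exact this

lemma reach_b1 : Reach ((1:ℝ), 0) := by
  have := reach_T (reach_f2 reach_b34)
  simpa [f2] using this

lemma reach_b0 : Reach ((0:ℝ), 0) := by
  have := reach_f2 reach_b1
  norm_num [f2] at this
  exact this

/-- Multiplication step on the bottom edge: from `(x,0)` reach `(1-(1-x)ρ_M, 0)`. -/
lemma reach_bstep (M : ℕ) {x : ℝ} (h : Reach (x, 0)) :
    Reach (1 - (1-x) * (1 - (1/2)^M), 0) := by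
  have h1 : Reach ((0:ℝ), 1-x) := by
    have h' := reach_f2 h
    have e : f2 (x, 0) = ((0:ℝ), 1-x) := by simp [f2]
    rwa [e] at h'
  have h2 := reach_W (List.replicate M 0) h1
  rw [W_replicate_zero] at h2
  have h3 := reach_T h2
  simpa using h3

lemma reach_bpow (M j : ℕ) : Reach (1 - (1 - (1/2 : ℝ)^M)^j, 0) := by
  induction j with
  | zero => simpa using reach_b0
  | succ j ih =>
    have := reach_bstep M ih
    have e : 1 - (1 - (1 - (1 - (1/2:ℝ)^M)^j)) * (1 - (1/2)^M)
        = 1 - (1 - (1/2:ℝ)^M)^(j+1) := by ring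
    rwa [e] at this

lemma reach_bottom {x : ℝ} (h0 : 0 ≤ x) (h1 : x ≤ 1) : Reach (x, 0) := by
  apply reach_near
  intro ε hε
  obtain ⟨M, hM⟩ : ∃ M : ℕ, ((1:ℝ)/2)^M < ε := exists_pow_lt_of_lt_one hε (by norm_num)
  set s := 1 - x with hs
  set ρ := 1 - (1/2:ℝ)^M with hρ
  have hρ0 : 0 ≤ ρ := by
    have h' : ((1:ℝ)/2)^M ≤ 1 := pow_le_one₀ (by norm_num) (by norm_num)
    rw [hρ]; linarith
  have hρ1 : ρ < 1 := by
    have h' : (0:ℝ) < (1/2:ℝ)^M := by positivity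
    rw [hρ]; linarith
  have hs0 : 0 ≤ s := by simp [hs]; linarith
  have hs1 : s ≤ 1 := by simp [hs]; linarith
  have hex : ∃ j : ℕ, ρ^j < s + (1/2)^M := by
    rcases eq_or_lt_of_le hρ0 with h0' | h0'
    · exact ⟨1, by rw [pow_one, ← h0']; positivity⟩
    · exact exists_pow_lt_of_lt_one (by positivity) hρ1
  classical
  obtain ⟨j, hj, hjmin⟩ : ∃ j, ρ^j < s + (1/2)^M ∧ ∀ k < j, ¬ (ρ^k < s + (1/2)^M) :=
    ⟨Nat.find hex, Nat.find_spec hex, fun k hk => Nat.find_min hex hk⟩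
  refine ⟨(1 - ρ^j, 0), reach_bpow M j, ?_⟩
  have hM0 : (0:ℝ) ≤ (1/2)^M := by positivity
  have key : |s - ρ^j| ≤ (1/2)^M := by
    rcases j with _ | k
    · rw [pow_zero] at hj
      rw [abs_le]; constructor <;> linarith
    · have hk : ¬ (ρ^k < s + (1/2)^M) := hjmin k (Nat.lt_succ_self k)
      push_neg at hk
      have h1 : ρ^(k+1) = ρ^k * ρ := pow_succ ρ k
      have hρk1 : ρ^k ≤ 1 := pow_le_one₀ hρ0 (le_of_lt hρ1)
      have hρkpos : (0:ℝ) ≤ ρ^k := pow_nonneg hρ0 k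
      rw [abs_le]; constructor
      · -- -(1/2)^M ≤ s - ρ^(k+1) ; since ρ^(k+1) ≤ ρ^k and s + (1/2)^M ≤ ρ^k... need other dir
        -- s - ρ^(k+1) ≥ ? we need ρ^(k+1) - s ≤ (1/2)^M, i.e. from hj
        linarith
      · -- s - ρ^(k+1) ≤ (1/2)^M : s ≤ ρ^k - (1/2)^M + (1/2)^M ... use hk : s + (1/2)^M ≤ ρ^k
        -- so s - ρ^(k+1) ≤ ρ^k - (1/2)^M - ρ^k * ρ = ρ^k (1 - ρ) - (1/2)^M
        -- and ρ^k (1-ρ) = ρ^k (1/2)^M ≤ (1/2)^M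
        have e2 : ρ^(k+1) = ρ^k - ρ^k * ((1/2:ℝ)^M) := by rw [h1, hρ]; ring
        linarith [mul_le_of_le_one_left hM0 hρk1]
  have ed : d1 (1 - ρ^j, 0) (x, 0) = |s - ρ^j| := by
    have : (1 : ℝ) - ρ^j - x = s - ρ^j := by rw [hs]; ring
    simp [d1, this]
  rw [ed]
  exact lt_of_le_of_lt key hM
lemma reach_left {y : ℝ} (h0 : 0 ≤ y) (h1 : y ≤ 1) : Reach (0, y) := by
  have h := reach_f2 (reach_bottom (by linarith : (0:ℝ) ≤ 1 - y) (by linarith))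
  have e : f2 ((1 - y : ℝ), 0) = ((0:ℝ), y) := by
    refine Prod.ext ?_ ?_ <;> simp [f2] <;> ring
  rwa [e] at h

lemma reach_hyp_low {t : ℝ} (h0 : 0 ≤ t) (h1 : t ≤ 1/2) : Reach (t, 1 - t) := by
  have h := reach_f2 (reach_left (by linarith : (0:ℝ) ≤ 2*t) (by linarith))
  have e : f2 ((0:ℝ), 2*t) = (t, 1 - t) := by
    refine Prod.ext ?_ ?_ <;> simp [f2] <;> ring
  rwa [e] at h

lemma reach_hyp_aux (k : ℕ) : ∀ t : ℝ, 0 ≤ t → t ≤ 1 - (1/2)^(k+1) → Reach (t, 1 - t) := by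
  induction k with
  | zero => intro t h0 h1; exact reach_hyp_low h0 (by norm_num at h1; linarith)
  | succ k ih =>
    intro t h0 h1
    rcases le_or_gt t (1/2) with h | h
    · exact reach_hyp_low h0 h
    · have h' := ih (2*t - 1) (by linarith) (by
        have : ((1:ℝ)/2)^(k+1+1) = (1/2)^(k+1) * (1/2) := pow_succ _ _
        nlinarith)
      have hf := reach_f1 h'
      have e : f1 ((2*t - 1 : ℝ), 1 - (2*t - 1)) = (t, 1 - t) := by
        simp [f1]; constructor <;> ring
      rwa [e] at hf

lemma reach_hyp {t : ℝ} (h0 : 0 ≤ t) (h1 : t ≤ 1) : Reach (t, 1 - t) := by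
  rcases eq_or_lt_of_le h1 with heq | hlt
  · subst heq; simpa using reach_b1
  · obtain ⟨k, hk⟩ : ∃ k : ℕ, ((1:ℝ)/2)^(k+1) < 1 - t := by
      obtain ⟨k, hk⟩ := exists_pow_lt_of_lt_one (by linarith : (0:ℝ) < 1 - t)
        (by norm_num : (1:ℝ)/2 < 1)
      refine ⟨k, lt_of_le_of_lt ?_ hk⟩
      have : ((1:ℝ)/2)^(k+1) = (1/2)^k * (1/2) := pow_succ _ _
      have hkk : (0:ℝ) ≤ (1/2)^k := by positivity
      linarith
    exact reach_hyp_aux k t h0 (by linarith)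

/- ### The triangle as an explicit set -/

/-- Explicit description of the triangle. -/
def Δ' : Set (ℝ × ℝ) := {p | 0 ≤ p.1 ∧ 0 ≤ p.2 ∧ p.1 + p.2 ≤ 1}

lemma convex_Δ' : Convex ℝ Δ' := by
  intro p hp q hq a b ha hb hab
  obtain ⟨hp1, hp2, hp3⟩ := hp
  obtain ⟨hq1, hq2, hq3⟩ := hq
  refine ⟨?_, ?_, ?_⟩ <;> simp [Prod.smul_def, Prod.fst_add, Prod.snd_add] <;> nlinarith

lemma delta_eq : Δ = Δ' := by
  apply le_antisymm
  · apply convexHull_min _ convex_Δ'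
    intro p hp
    rcases hp with h | h | h <;> (rw [h]; exact ⟨by norm_num, by norm_num, by norm_num⟩)
  · intro p hp
    obtain ⟨h1, h2, h3⟩ := hp
    unfold Δ
    rcases eq_or_lt_of_le (add_nonneg h1 h2) with h0 | h0
    · have hp1 : p.1 = 0 := by linarith [h2]
      have hp2 : p.2 = 0 := by linarith [h1]
      have : p = ((0:ℝ), (0:ℝ)) := Prod.ext hp1 hp2
      rw [this]
      exact subset_convexHull ℝ _ (by simp)
    · set t : ℝ := p.1 + p.2 with ht
      have hz : (p.1 / t, p.2 / t) ∈ convexHull ℝ {((1:ℝ),(0:ℝ)), ((0:ℝ),(1:ℝ))} := by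
        rw [convexHull_pair]
        refine ⟨p.1 / t, p.2 / t, by positivity, by positivity, by field_simp; exact ht.symm, ?_⟩
        simp [Prod.smul_def]
      have hins : ({((0:ℝ),(0:ℝ)), ((1:ℝ),(0:ℝ)), ((0:ℝ),(1:ℝ))} : Set (ℝ×ℝ))
          = insert ((0:ℝ),(0:ℝ)) {((1:ℝ),(0:ℝ)), ((0:ℝ),(1:ℝ))} := rfl
      rw [hins, convexHull_insert ⟨((1:ℝ),(0:ℝ)), by simp⟩, mem_convexJoin]
      refine ⟨((0:ℝ),(0:ℝ)), rfl, (p.1 / t, p.2 / t), hz, ?_⟩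
      refine ⟨1 - t, t, by linarith, le_of_lt h0, by ring, ?_⟩
      refine Prod.ext ?_ ?_ <;> simp <;> field_simp
lemma maps_f1 {p : ℝ × ℝ} (hp : p ∈ Δ') : f1 p ∈ Δ' := by
  obtain ⟨h1, h2, h3⟩ := hp
  exact ⟨by simp [f1]; linarith, by simp [f1]; linarith, by simp [f1]; linarith⟩

lemma maps_f2 {p : ℝ × ℝ} (hp : p ∈ Δ') : f2 p ∈ Δ' := by
  obtain ⟨h1, h2, h3⟩ := hp
  exact ⟨by simp [f2]; linarith, by simp [f2]; linarith, by simp [f2]; linarith⟩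

lemma maps_f (i : Fin 2) {p : ℝ × ℝ} (hp : p ∈ Δ') : ![f1, f2] i p ∈ Δ' :=
  match i with
  | 0 => maps_f1 hp
  | 1 => maps_f2 hp

/-- The covering property `f₁(Δ) ∪ f₂(Δ) = Δ` (the inclusion we need). -/
lemma cover {p : ℝ × ℝ} (hp : p ∈ Δ') : ∃ i : Fin 2, ∃ b ∈ Δ', ![f1, f2] i b = p := by
  obtain ⟨h1, h2, h3⟩ := hp
  rcases le_or_gt p.2 p.1 with h | h
  · refine ⟨0, (p.1 - p.2, 2 * p.2), ⟨by simpa using h, by simpa using h2, by simp; linarith⟩, ?_⟩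
    refine Prod.ext ?_ ?_ <;> simp [f1] <;> ring
  · refine ⟨1, (1 - p.1 - p.2, 2 * p.1), ⟨by simp; linarith, by simpa using h1, by simp; linarith⟩, ?_⟩
    refine Prod.ext ?_ ?_ <;> simp [f2] <;> ring

/-- Every point of the triangle has addresses of every length. -/
lemma address {a : ℝ × ℝ} (ha : a ∈ Δ') (n : ℕ) :
    ∃ l : List (Fin 2), l.length = n ∧ ∃ b ∈ Δ', W l b = a := by
  induction n generalizing a with
  | zero => exact ⟨[], rfl, a, ha, rfl⟩
  | succ n ih =>
    obtain ⟨i, b, hb, hib⟩ := cover ha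
    obtain ⟨l, hlen, b', hb', hw⟩ := ih hb
    exact ⟨i :: l, by simp [hlen], b', hb', by rw [W_cons, hw, hib]⟩

/- ### The maps as homeomorphisms -/

noncomputable def h1 : (ℝ × ℝ) ≃ₜ (ℝ × ℝ) where
  toFun := f1
  invFun := fun p => (p.1 - p.2, 2 * p.2)
  left_inv := fun p => by refine Prod.ext ?_ ?_ <;> simp [f1] <;> ring
  right_inv := fun p => by refine Prod.ext ?_ ?_ <;> simp [f1] <;> ring
  continuous_toFun := by unfold f1; fun_prop
  continuous_invFun := by fun_prop

noncomputable def h2 : (ℝ × ℝ) ≃ₜ (ℝ × ℝ) where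
  toFun := f2
  invFun := fun p => (1 - p.1 - p.2, 2 * p.1)
  left_inv := fun p => by refine Prod.ext ?_ ?_ <;> simp [f2] <;> ring
  right_inv := fun p => by refine Prod.ext ?_ ?_ <;> simp [f2] <;> ring
  continuous_toFun := by unfold f2; fun_prop
  continuous_invFun := by fun_prop

noncomputable def hW : List (Fin 2) → ((ℝ × ℝ) ≃ₜ (ℝ × ℝ))
  | [] => Homeomorph.refl _
  | i :: t => (hW t).trans (![h1, h2] i)

lemma hW_coe (l : List (Fin 2)) : ⇑(hW l) = W l := by
  induction l with
  | nil => rfl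
  | cons i t ih =>
    funext p
    show (![h1, h2] i) (hW t p) = ![f1, f2] i (W t p)
    rw [ih]
    match i with
    | 0 => rfl
    | 1 => rfl

lemma frontier_image (l : List (Fin 2)) (s : Set (ℝ × ℝ)) :
    frontier (W l '' s) = W l '' frontier s := by
  rw [← hW_coe]
  exact ((hW l).image_frontier s).symm
/- ### Volume estimates -/

noncomputable def L1 : (ℝ × ℝ) →ₗ[ℝ] (ℝ × ℝ) where
  toFun p := (p.1 + p.2/2, p.2/2)
  map_add' p q := by ext <;> simp <;> ring
  map_smul' m p := by ext <;> simp <;> ring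

noncomputable def L2 : (ℝ × ℝ) →ₗ[ℝ] (ℝ × ℝ) where
  toFun p := (p.2/2, - p.1 - p.2/2)
  map_add' p q := by ext <;> simp <;> ring
  map_smul' m p := by ext <;> simp <;> ring

lemma det_L1 : LinearMap.det L1 = 1/2 := by
  rw [← LinearMap.det_toMatrix (Module.Basis.finTwoProd ℝ), Matrix.det_fin_two]
  simp [LinearMap.toMatrix_apply, L1]

lemma det_L2 : LinearMap.det L2 = 1/2 := by
  rw [← LinearMap.det_toMatrix (Module.Basis.finTwoProd ℝ), Matrix.det_fin_two]
  simp [LinearMap.toMatrix_apply, L2]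

open MeasureTheory in
lemma vol_f1 (s : Set (ℝ × ℝ)) : volume (f1 '' s) = ENNReal.ofReal (1/2) * volume s := by
  have hf : f1 = ⇑L1 := rfl
  rw [hf, Measure.addHaar_image_linearMap, det_L1,
    show |(1:ℝ)/2| = 1/2 from abs_of_nonneg (by norm_num)]

open MeasureTheory in
lemma vol_f2 (s : Set (ℝ × ℝ)) : volume (f2 '' s) = ENNReal.ofReal (1/2) * volume s := by
  have hf : f2 = (fun q => ((0:ℝ),(1:ℝ)) + q) ∘ ⇑L2 := by
    funext p
    refine Prod.ext ?_ ?_ <;> simp [f2, L2] <;> ring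
  rw [hf, Set.image_comp, Set.image_add_left, measure_preimage_add,
    Measure.addHaar_image_linearMap, det_L2,
    show |(1:ℝ)/2| = 1/2 from abs_of_nonneg (by norm_num)]

open MeasureTheory in
lemma vol_W (l : List (Fin 2)) (s : Set (ℝ × ℝ)) :
    volume (W l '' s) = (ENNReal.ofReal (1/2)) ^ l.length * volume s := by
  induction l with
  | nil => simp [W_nil]; rw [show W [] = id from rfl, Set.image_id]
  | cons i t ih =>
    have : W (i :: t) '' s = ![f1, f2] i '' (W t '' s) := by
      rw [← Set.image_comp]; rfl
    rw [this]
    have : volume (![f1, f2] i '' (W t '' s)) = ENNReal.ofReal (1/2) * volume (W t '' s) := by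
      match i with
      | 0 => exact vol_f1 _
      | 1 => exact vol_f2 _
    rw [this, ih, List.length_cons, pow_succ]
    ring

open MeasureTheory in
lemma vol_Δ' : volume Δ' ≤ 1 := by
  have hsub : Δ' ⊆ Set.Icc ((0:ℝ),(0:ℝ)) ((1:ℝ),(1:ℝ)) := by
    rintro p ⟨h1, h2, h3⟩
    constructor
    · exact ⟨h1, h2⟩
    · exact ⟨by dsimp; linarith, by dsimp; linarith⟩
  calc volume Δ' ≤ volume (Set.Icc ((0:ℝ),(0:ℝ)) ((1:ℝ),(1:ℝ))) := measure_mono hsub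
    _ = 1 := by
      rw [show Set.Icc ((0:ℝ),(0:ℝ)) ((1:ℝ),(1:ℝ))
          = Set.Icc (0:ℝ) 1 ×ˢ Set.Icc (0:ℝ) 1 from (Set.Icc_prod_eq _ _)]
      rw [MeasureTheory.Measure.volume_eq_prod, Measure.prod_prod, Real.volume_Icc]
      norm_num

/- ### Contraction along `f₂³` -/

lemma f2cube (p : ℝ × ℝ) : d1 (f2 (f2 (f2 p))) cpt ≤ d1 p cpt / 2 := by
  have e : f2 (f2 (f2 p)) =
      (1/4 + ((1/4)*(p.1 - 1/4) + (-(1/8))*(p.2 - 1/2)),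
       1/2 + ((1/4)*(p.1 - 1/4) + (3/8)*(p.2 - 1/2))) := by
    refine Prod.ext ?_ ?_ <;> simp [f2] <;> ring
  rw [e]
  unfold d1 cpt
  simp only [add_sub_cancel_left]
  calc |(1/4)*(p.1 - 1/4) + (-(1/8))*(p.2 - 1/2)| + |(1/4)*(p.1 - 1/4) + (3/8)*(p.2 - 1/2)|
      ≤ (|(1/4:ℝ)| + |(1/4:ℝ)|) * |p.1 - 1/4| + (|(-(1/8):ℝ)| + |(3/8:ℝ)|) * |p.2 - 1/2| :=
        abs_lin _ _ _ _ _ _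
    _ ≤ (|p.1 - 1/4| + |p.2 - 1/2|) / 2 := by
        rw [abs_neg]
        rw [abs_of_nonneg (by norm_num : (0:ℝ) ≤ 1/4),
          abs_of_nonneg (by norm_num : (0:ℝ) ≤ 1/8),
          abs_of_nonneg (by norm_num : (0:ℝ) ≤ 3/8)]
        have := abs_nonneg (p.1 - 1/4)
        have := abs_nonneg (p.2 - 1/2)
        linarith
    _ = (|p.1 - (1/4:ℝ)| + |p.2 - (1/2:ℝ)|) / 2 := by norm_num

lemma W_twos (m : ℕ) (p : ℝ × ℝ) :
    d1 (W (List.replicate (3*m) 1) p) cpt ≤ (1/2)^m * d1 p cpt := by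
  induction m with
  | zero => simp [W_nil]
  | succ m ih =>
    have e : List.replicate (3*(m+1)) (1 : Fin 2)
        = 1 :: 1 :: 1 :: List.replicate (3*m) 1 := by
      rw [show 3*(m+1) = (3*m) + 1 + 1 + 1 by ring]
      simp [List.replicate_succ]
    rw [e, W_cons, W_cons, W_cons]
    show d1 (f2 (f2 (f2 (W (List.replicate (3*m) 1) p)))) cpt ≤ _
    calc d1 (f2 (f2 (f2 (W (List.replicate (3*m) 1) p)))) cpt
        ≤ d1 (W (List.replicate (3*m) 1) p) cpt / 2 := f2cube _
      _ ≤ ((1/2)^m * d1 p cpt) / 2 := by linarith [ih]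
      _ = (1/2)^(m+1) * d1 p cpt := by rw [pow_succ]; ring
/- ### The boundary of the triangle is approximable -/

lemma isClosed_Δ' : IsClosed Δ' := by
  have : Δ' = {p : ℝ × ℝ | 0 ≤ p.1} ∩ ({p | 0 ≤ p.2} ∩ {p | p.1 + p.2 ≤ 1}) := by
    ext p; simp [Δ']
  rw [this]
  exact (isClosed_le continuous_const continuous_fst).inter
    ((isClosed_le continuous_const continuous_snd).inter
      (isClosed_le (continuous_fst.add continuous_snd) continuous_const))

lemma reach_frontier {q : ℝ × ℝ} (hq : q ∈ frontier Δ') : Reach q := by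
  have hqΔ : q ∈ Δ' := by
    have := hq.1
    rwa [isClosed_Δ'.closure_eq] at this
  obtain ⟨h1, h2, h3⟩ := hqΔ
  have hnint : ¬(0 < q.1 ∧ 0 < q.2 ∧ q.1 + q.2 < 1) := by
    intro ⟨ha, hb, hc⟩
    have hopen : IsOpen {p : ℝ × ℝ | 0 < p.1 ∧ 0 < p.2 ∧ p.1 + p.2 < 1} := by
      refine (isOpen_lt continuous_const continuous_fst).inter
        ((isOpen_lt continuous_const continuous_snd).inter
          (isOpen_lt (continuous_fst.add continuous_snd) continuous_const))
    have hsub : {p : ℝ × ℝ | 0 < p.1 ∧ 0 < p.2 ∧ p.1 + p.2 < 1} ⊆ Δ' := by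
      rintro p ⟨hp1, hp2, hp3⟩; exact ⟨hp1.le, hp2.le, hp3.le⟩
    have : q ∈ interior Δ' := (hopen.subset_interior_iff.2 hsub) ⟨ha, hb, hc⟩
    exact hq.2 this
  push_neg at hnint
  rcases eq_or_lt_of_le h1 with he1 | he1
  · -- q.1 = 0 : left edge
    have : q = ((0:ℝ), q.2) := Prod.ext he1.symm rfl
    rw [this]; exact reach_left h2 (by linarith)
  rcases eq_or_lt_of_le h2 with he2 | he2
  · have : q = (q.1, (0:ℝ)) := Prod.ext rfl he2.symm
    rw [this]; exact reach_bottom h1 (by linarith)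
  have he3 : q.1 + q.2 = 1 := le_antisymm h3 (hnint he1 he2)
  have : q = (q.1, 1 - q.1) := Prod.ext rfl (by dsimp only; linarith)
  rw [this]; exact reach_hyp h1 (by linarith)

lemma d1_le_two_dist (p q : ℝ × ℝ) : d1 p q ≤ 2 * dist p q := by
  unfold d1
  have h1 : |p.1 - q.1| ≤ dist p q := by
    rw [Prod.dist_eq, ← Real.dist_eq]; exact le_max_left _ _
  have h2 : |p.2 - q.2| ≤ dist p q := by
    rw [Prod.dist_eq, ← Real.dist_eq]; exact le_max_right _ _
  linarith

/- ### Every point of the triangle is approximable -/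

open MeasureTheory Metric in
lemma reach_all {a : ℝ × ℝ} (ha : a ∈ Δ') : Reach a := by
  apply reach_near
  intro ε hε
  obtain ⟨k, hk⟩ : ∃ k : ℕ, ((1:ℝ)/2)^k < ε/2 :=
    exists_pow_lt_of_lt_one (by linarith) (by norm_num)
  set n := 2*k+3 with hn
  obtain ⟨l, hlen, b, hb, hwb⟩ := address ha n
  set T := W l '' Δ' with hT
  have haT : a ∈ T := ⟨b, hb, hwb⟩
  set r := ((1:ℝ)/2)^k with hr
  have hr0 : 0 < r := by positivity
  have hfront : ∃ p ∈ frontier T, dist a p ≤ r := by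
    by_contra hcon
    push_neg at hcon
    have hafr : a ∉ frontier T := fun h => absurd (hcon a h) (by simp [hr0.le])
    have hint : a ∈ interior T := by
      have hacl : a ∈ closure T := subset_closure haT
      rw [frontier, Set.mem_diff] at hafr
      push_neg at hafr
      exact hafr hacl
    have hball : Metric.closedBall a r ⊆ interior T := by
      have hsub : Metric.closedBall a r ⊆ interior T ∪ (closure T)ᶜ := by
        intro x hx
        by_cases hxc : x ∈ closure T
        · left
          have hxf : x ∉ frontier T := by
            intro hxf
            have h' := hcon x hxf
            rw [dist_comm] at h'
            exact absurd (Metric.mem_closedBall.1 hx) (not_le.2 h')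
          rw [frontier, Set.mem_diff] at hxf
          push_neg at hxf
          exact hxf hxc
        · right; exact hxc
      exact ((convex_closedBall a r).isPreconnected).subset_left_of_subset_union
        isOpen_interior isClosed_closure.isOpen_compl
        (Set.disjoint_left.2 fun x hxi hxc => hxc (subset_closure (interior_subset hxi)))
        hsub ⟨a, Metric.mem_closedBall_self hr0.le, hint⟩
    have h1 : volume (Metric.closedBall a r) ≤ volume T :=
      measure_mono (hball.trans interior_subset)
    have h2 : volume T ≤ ENNReal.ofReal ((1/2)^n) := by
      rw [hT, vol_W, hlen, ← ENNReal.ofReal_pow (by norm_num : (0:ℝ) ≤ 1/2)]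
      calc ENNReal.ofReal ((1/2)^n) * volume Δ'
          ≤ ENNReal.ofReal ((1/2)^n) * 1 := mul_le_mul_right vol_Δ' _
        _ = ENNReal.ofReal ((1/2)^n) := mul_one _
    have h3 : volume (Metric.closedBall a r)
        = ENNReal.ofReal (2*r) * ENNReal.ofReal (2*r) := by
      have hcb := closedBall_prod_same a.1 a.2 r
      rw [Prod.mk.eta] at hcb
      rw [← hcb, Measure.volume_eq_prod, Measure.prod_prod,
        Real.volume_closedBall, Real.volume_closedBall]
    have h4 : volume (Metric.closedBall a r) = ENNReal.ofReal (4*r^2) := by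
      rw [h3, ← ENNReal.ofReal_mul (by positivity)]
      congr 1
      ring
    have h5 : (4:ℝ)*r^2 ≤ (1/2)^n := by
      rw [← ENNReal.ofReal_le_ofReal_iff (by positivity : (0:ℝ) ≤ (1/2)^n), ← h4]
      exact h1.trans h2
    have h6 : ((1:ℝ)/2)^n = r^2 * (1/8) := by
      rw [hn, hr, pow_add, ← pow_mul, mul_comm 2 k, pow_mul]
      norm_num
    nlinarith [hr0]
  obtain ⟨p, hpf, hpd⟩ := hfront
  rw [hT, frontier_image] at hpf
  obtain ⟨q, hqf, hqp⟩ := hpf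
  refine ⟨p, by rw [← hqp]; exact reach_W l (reach_frontier hqf), ?_⟩
  calc d1 p a ≤ 2 * dist p a := d1_le_two_dist _ _
    _ = 2 * dist a p := by rw [dist_comm]
    _ ≤ 2 * r := by linarith
    _ < ε := by rw [hr]; linarith
/- ### The main theorem -/

lemma d1_cpt_bound {b : ℝ × ℝ} (hb : b ∈ Δ') : d1 b cpt ≤ 2 := by
  obtain ⟨hb1, hb2, hb3⟩ := hb
  unfold d1 cpt
  have e1 : |b.1 - 1/4| ≤ 1 := abs_le.2 ⟨by linarith, by linarith⟩
  have e2 : |b.2 - 1/2| ≤ 1 := abs_le.2 ⟨by linarith, by linarith⟩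
  change |b.1 - 1/4| + |b.2 - 1/2| ≤ 2
  linarith

/-- `Δ` is strongly-fibred by the IFS `(f₁, f₂)`: every point of `Δ` has, inside any of its
open neighbourhoods, an entire fibre. -/
theorem triangle_stronglyFibred :
    ∀ a ∈ Δ, ∀ V : Set (ℝ × ℝ), IsOpen V → a ∈ V →
      ∃ i : ℕ → Fin 2, fibre i ⊆ V := by
  intro a haΔ V hV haV
  rw [delta_eq] at haΔ
  obtain ⟨ε, hε, hball⟩ := Metric.isOpen_iff.1 hV a haV
  obtain ⟨m, hm⟩ : ∃ m : ℕ, ((1:ℝ)/2)^m < ε/4 :=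
    exists_pow_lt_of_lt_one (by linarith) (by norm_num)
  obtain ⟨l, hl⟩ := reach_all haΔ (ε/2) (by linarith)
  classical
  set i : ℕ → Fin 2 := fun j => if h : j < l.length then l.get ⟨j, h⟩ else 1 with hi
  refine ⟨i, ?_⟩
  set mm := m + 1 with hmm
  set N := l.length + 3*mm with hN
  have hofn : (List.ofFn fun j : Fin (N - 1 + 1) => i j) = l ++ List.replicate (3*mm) 1 := by
    apply List.ext_getElem
    · simp; omega
    · intro j h1 h2
      rw [List.getElem_ofFn]
      simp only [hi]
      by_cases hj : j < l.length
      · rw [List.getElem_append_left hj]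
        simp [hj]
      · rw [List.getElem_append_right (le_of_not_gt hj)]
        simp [hj, List.getElem_replicate]
  intro x hx
  have hx' : x ∈ W (l ++ List.replicate (3*mm) 1) '' Δ := by
    have h' := Set.mem_iInter.1 hx (N - 1)
    rw [hofn] at h'
    exact h'
  obtain ⟨b, hbΔ, hbx⟩ := hx'
  rw [delta_eq] at hbΔ
  rw [W_append] at hbx
  apply hball
  rw [Metric.mem_ball]
  have hc1 : d1 (W (List.replicate (3*mm) 1) b) cpt ≤ (1/2)^mm * 2 := by
    refine (W_twos mm b).trans ?_
    have hp : (0:ℝ) ≤ (1/2)^mm := by positivity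
    nlinarith [d1_cpt_bound hbΔ, d1_nonneg b cpt]
  have hc2 : d1 x (W l cpt) ≤ (1/2)^mm * 2 := by
    rw [← hbx]
    exact (lip_W l _ _).trans hc1
  have hc3 : (1/2:ℝ)^mm * 2 < ε/2 := by
    have hle : ((1:ℝ)/2)^mm ≤ (1/2)^m := by
      rw [hmm, pow_succ]
      nlinarith [pow_pos (by norm_num : (0:ℝ) < 1/2) m]
    linarith
  calc dist x a ≤ d1 x a := dist_le_d1 _ _
    _ ≤ d1 x (W l cpt) + d1 (W l cpt) a := d1_triangle _ _ _
    _ < ε := by linarith
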